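/- arXiv:math/9908130 — 4 statements merged into one kernel-verified Lean document; each statement's English description precedes it below -/
import Mathlib

section
/- If T and T' are straight tableaux of the same row-convex shape D and T ≠ T', then their modified column words differ: w_T ≠ w_{T'}. Equivalently, a straight tableau of shape D is uniquely determined by its shape together with the multiset of entries in each column. -/
open scoped BigOperators

/-- A cell `(row, column)` of a diagram. -/
abbrev Cell := ℕ × ℕ

/-- A shape is row-convex if its rows have no gaps. -/
def RowConvex (D : Finset Cell) : Prop :=
  ∀ r i j k : ℕ, (r, i) ∈ D → (r, k) ∈ D → i ≤ j → j ≤ k → (r, j) ∈ D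

/-- Rows strictly increase left to right (negative-letter convention). -/
def RowStandard (D : Finset Cell) (T : Cell → ℕ) : Prop :=
  ∀ r i j : ℕ, (r, i) ∈ D → (r, j) ∈ D → i < j → T (r, i) < T (r, j)

/-- A straight tableau (negative-letter case). -/
def Straight (D : Finset Cell) (T : Cell → ℕ) : Prop :=
  RowStandard D T ∧
    ∀ i j k : ℕ, (i, k) ∈ D → (j, k) ∈ D → i < j → T (j, k) < T (i, k) →
      1 ≤ k ∧ (i, k - 1) ∈ D ∧ T (j, k) < T (i, k - 1)

/-- Multiset of entries of `T` in column `k` of `D`. -/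
def colEntries (D : Finset Cell) (T : Cell → ℕ) (k : ℕ) : Multiset ℕ :=
  (D.filter (fun c => c.2 = k)).val.map T

/-!
Compare `T` and `T'` at a disagreement `(i, k)` that is minimal: the columns left of `k` agree,
and `v = T (i, k) < T' (i, k)` is the smallest value occurring at a disagreement of column `k`.
Since column `k` holds `v` equally often in both tableaux, some other cell `(j, k)` has
`T' (j, k) = v < T (j, k)`. The two rows `i, j` then form a column inversion in one of the
tableaux, and the straightness condition, transported to the other tableau through the common
column `k - 1`, contradicts its row-standardness.
-/

lemma Finset.exists_mem_eq_ne_of_map_eq {α β : Type*} [DecidableEq β] {s : Finset α}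
    {f g : α → β} (hfg : s.val.map f = s.val.map g) {a : α} (ha : a ∈ s) (hga : g a ≠ f a) :
    ∃ b ∈ s, g b = f a ∧ f b ≠ f a := by
  have hcard : (s.filter (g · = f a)).card = (s.filter (f · = f a)).card := by
    have := congrArg (Multiset.count (f a)) hfg.symm
    simp only [Multiset.count_map] at this
    simpa only [Finset.card_def, Finset.filter_val, eq_comm] using this
  by_contra! h
  have hsub : s.filter (g · = f a) ⊆ s.filter (f · = f a) := fun b hb => by
    rw [Finset.mem_filter] at hb ⊢
    exact ⟨hb.1, h b hb.1 hb.2⟩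
  have ha' : a ∈ s.filter (g · = f a) := by
    rw [Finset.eq_of_subset_of_card_le hsub hcard.ge]
    exact Finset.mem_filter.2 ⟨ha, rfl⟩
  exact hga (Finset.mem_filter.1 ha').2

lemma lt_of_inversion_of_agree_left {D : Finset Cell} {T T' : Cell → ℕ}
    (hT : RowStandard D T) (hT' : Straight D T') {i j k : ℕ}
    (hagree : ∀ c ∈ D, c.2 < k → T c = T' c)
    (hi : (i, k) ∈ D) (hj : (j, k) ∈ D) (hij : i < j) (hinv : T' (j, k) < T' (i, k)) :
    T' (j, k) < T (i, k) := by
  obtain ⟨hk, hleft, hlt⟩ := hT'.2 i j k hi hj hij hinv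
  calc T' (j, k) < T' (i, k - 1) := hlt
    _ = T (i, k - 1) := (hagree _ hleft (by simp only; omega)).symm
    _ < T (i, k) := hT i (k - 1) k hleft hi (by omega)

lemma exists_minimal_disagreement (D : Finset Cell) (T T' : Cell → ℕ)
    (h : ∃ c ∈ D, T c ≠ T' c) :
    ∃ c ∈ D, T c ≠ T' c ∧ (∀ c' ∈ D, c'.2 < c.2 → T c' = T' c') ∧
      ∀ c' ∈ D, c'.2 = c.2 → T c' ≠ T' c' → min (T c) (T' c) ≤ min (T c') (T' c') := by
  obtain ⟨c₀, hc₀⟩ := h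
  obtain ⟨c, hc, hmin⟩ := (D.filter fun c => T c ≠ T' c).exists_min_image
    (fun c => toLex (c.2, min (T c) (T' c))) ⟨c₀, Finset.mem_filter.2 hc₀⟩
  have hmin' : ∀ c' ∈ D, T c' ≠ T' c' →
      toLex (c.2, min (T c) (T' c)) ≤ toLex (c'.2, min (T c') (T' c')) :=
    fun c' hc' hne => hmin c' (Finset.mem_filter.2 ⟨hc', hne⟩)
  refine ⟨c, (Finset.mem_filter.1 hc).1, (Finset.mem_filter.1 hc).2, ?_, ?_⟩
  · intro c' hc' hlt
    by_contra hne
    have := Prod.Lex.toLex_le_toLex.1 (hmin' c' hc' hne)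
    omega
  · intro c' hc' hcol hne
    have := Prod.Lex.toLex_le_toLex.1 (hmin' c' hc' hne)
    simpa [hcol] using this

lemma false_of_minimal_disagreement {D : Finset Cell} {T T' : Cell → ℕ}
    (hT : Straight D T) (hT' : Straight D T')
    (hcols : ∀ k : ℕ, colEntries D T k = colEntries D T' k)
    {i k : ℕ} (hc : (i, k) ∈ D) (hlt : T (i, k) < T' (i, k))
    (hleft : ∀ c' ∈ D, c'.2 < k → T c' = T' c')
    (hmin : ∀ c' ∈ D, c'.2 = k → T c' ≠ T' c' → T (i, k) ≤ T c') : False := by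
  obtain ⟨⟨j, k'⟩, hc', hT'c', hTc'⟩ := Finset.exists_mem_eq_ne_of_map_eq (hcols k)
    (Finset.mem_filter.2 ⟨hc, rfl⟩) hlt.ne'
  obtain ⟨hj, hk : k' = k⟩ := Finset.mem_filter.1 hc'
  subst k'
  have hgt : T (i, k) < T (j, k) :=
    (hmin _ hj rfl (by rw [hT'c']; exact hTc')).lt_of_ne' hTc'
  rcases lt_trichotomy i j with hij | rfl | hij
  · exact (lt_of_inversion_of_agree_left hT.1 hT' hleft hc hj hij (hT'c' ▸ hlt)).ne hT'c'
  · exact hlt.ne' hT'c'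
  · exact (lt_of_inversion_of_agree_left hT'.1 hT (fun c h hk => (hleft c h hk).symm)
      hj hc hij hgt).ne' hT'c'

theorem straight_determined_by_column_contents_general
    (D : Finset Cell) (T T' : Cell → ℕ)
    (hT : Straight D T) (hT' : Straight D T')
    (hcols : ∀ k : ℕ, colEntries D T k = colEntries D T' k) :
    ∀ c ∈ D, T c = T' c := by
  by_contra! h
  obtain ⟨⟨i, k⟩, hc, hne, hleft, hmin⟩ := exists_minimal_disagreement D T T' h
  rcases hne.lt_or_gt with hlt | hlt
  · refine false_of_minimal_disagreement hT hT' hcols hc hlt hleft fun c' hc' hcol hne' => ?_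
    exact (le_min_iff.1 (min_eq_left hlt.le ▸ hmin c' hc' hcol hne')).1
  · refine false_of_minimal_disagreement hT' hT (fun k => (hcols k).symm) hc hlt
      (fun c' hc' hk => (hleft c' hc' hk).symm) fun c' hc' hcol hne' => ?_
    exact (le_min_iff.1 (min_eq_right hlt.le ▸ hmin c' hc' hcol (Ne.symm hne'))).2

/-- A straight tableau of a row-convex shape `D` is uniquely determined by the
multiset of its entries in each column (equivalently, by its modified column
word): two straight tableaux of shape `D` with the same column contents agree
on `D`. -/
theorem straight_determined_by_column_contents
    (D : Finset Cell) (hD : RowConvex D) (T T' : Cell → ℕ)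
    (hT : Straight D T) (hT' : Straight D T')
    (hcols : ∀ k : ℕ, colEntries D T k = colEntries D T' k) :
    ∀ c ∈ D, T c = T' c :=
  straight_determined_by_column_contents_general D T T' hT hT' hcols
end

section
/- Let T be a tableau of row-convex shape whose rows strictly increase and whose columns contain no repeated letters (negative/commutative case). Then the lexicographically smallest monomial of the product of row minors [T] = ∏_i det( (x_{T(i,c), c'})_{c,c' ∈ columns of row i} ) is the product ∏ over cells (i,c) of x_{T(i,c), c}; that is, the diagonal monomial of each row determinant multiplies to the initial monomial of [T]. -/
open scoped BigOperators

/-- Sorted list of column indices of the cells of `D` in row `r`. -/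
def rowColsList (D : Finset Cell) (r : ℕ) : List ℕ :=
  ((D.filter (fun c => c.1 = r)).val.map Prod.snd).sort (· ≤ ·)

/-- The bracket (determinant of the minor of the generic matrix `(x_{l,p})`)
corresponding to row `r` of the tableau `T`. -/
noncomputable def rowBracket (D : Finset Cell) (T : Cell → ℕ) (r : ℕ) :
    MvPolynomial Cell ℤ :=
  Matrix.det (Matrix.of fun s t : Fin (rowColsList D r).length =>
    MvPolynomial.X (T (r, (rowColsList D r).get s), (rowColsList D r).get t))

/-- `[T]`: the product over the rows of `D` of the row brackets. -/
noncomputable def bracket (D : Finset Cell) (T : Cell → ℕ) : MvPolynomial Cell ℤ :=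
  ∏ r ∈ D.image Prod.fst, rowBracket D T r

/-- The modified column word: entries of each column in weakly decreasing
order, columns read left to right. -/
def modColWord (D : Finset Cell) (T : Cell → ℕ) : List ℕ :=
  (List.range (D.sup Prod.snd + 1)).flatMap fun k =>
    ((colEntries D T k).sort (· ≤ ·)).reverse

/-- The column word: entries read bottom to top within each column, columns
left to right. -/
def colWord (D : Finset Cell) (T : Cell → ℕ) : List ℕ :=
  (List.range (D.sup Prod.snd + 1)).flatMap fun k =>
    (List.range (D.sup Prod.fst + 1)).reverse.filterMap fun i =>
      if (i, k) ∈ D then some (T (i, k)) else none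

/-- Strict lexicographic order on words. -/
def lexLt (u v : List ℕ) : Prop := List.Lex (· < ·) u v

/-- Weak lexicographic order on words. -/
def lexLe (u v : List ℕ) : Prop := u = v ∨ List.Lex (· < ·) u v

/-- `varGt v w`: the variable `x_v` is greater than `x_w` in the default
diagonal order: strictly earlier column, or same column and strictly larger
row index (letter). -/
def varGt (v w : Cell) : Prop := v.2 < w.2 ∨ (v.2 = w.2 ∧ w.1 < v.1)

/-- The default diagonal term order on monomials: `monLt M N` iff the greatest
variable occurring to different powers in `M` and `N` divides `N` to a higher
power. -/
def monLt (M N : Cell →₀ ℕ) : Prop :=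
  ∃ v : Cell, M v < N v ∧ ∀ w : Cell, varGt w v → M w = N w

/-- The diagonal monomial of a tableau: the product over the cells `(i, c)` of
`D` of the variables `x_{T(i,c), c}`. -/
noncomputable def diagMon (D : Finset Cell) (T : Cell → ℕ) : Cell →₀ ℕ :=
  ∑ c ∈ D, Finsupp.single (T c, c.2) 1

/-- `m` is the initial (smallest) monomial of `p` in the default diagonal term
order. -/
def IsInitMon (p : MvPolynomial Cell ℤ) (m : Cell →₀ ℕ) : Prop :=
  m ∈ p.support ∧ ∀ m' ∈ p.support, m' = m ∨ monLt m m'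

/-! The term order is compatible with multiplication and `ℤ` has no zero divisors, so the
initial monomial of a product is the product of the initial monomials, and it suffices to treat
one row bracket `[a₁ … a_k | b₁ … b_k] = ∑_σ sign σ ∏ᵢ x_{a_{σ i}, b_i}` with `a` and `b` strictly
increasing. If `σ ≠ 1` and `t` is the first index it moves, then `a_{σ t} > a_t`, so
`x_{a_{σ t}, b_t}` divides the `σ`-monomial but not the diagonal one, while every larger
variable occurs equally often in both. -/

open MvPolynomial

lemma varGt_trans {u v w : Cell} (huv : varGt u v) (hvw : varGt v w) : varGt u w := by
  unfold varGt at *; omega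

lemma varGt_or_varGt_of_ne {v w : Cell} (h : v ≠ w) : varGt v w ∨ varGt w v := by
  rw [Ne, Prod.ext_iff] at h
  unfold varGt; omega

lemma monLt_irrefl (M : Cell →₀ ℕ) : ¬ monLt M M := fun ⟨_, h, _⟩ => h.false

lemma monLt_trans {M N P : Cell →₀ ℕ} (hMN : monLt M N) (hNP : monLt N P) : monLt M P := by
  obtain ⟨v, hv, hv'⟩ := hMN
  obtain ⟨u, hu, hu'⟩ := hNP
  rcases eq_or_ne v u with rfl | hne
  · exact ⟨v, hv.trans hu, fun w hw => (hv' w hw).trans (hu' w hw)⟩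
  rcases varGt_or_varGt_of_ne hne with h | h
  · exact ⟨v, hu' v h ▸ hv, fun w hw => (hv' w hw).trans (hu' w (varGt_trans hw h))⟩
  · exact ⟨u, hv' u h ▸ hu, fun w hw => (hv' w (varGt_trans hw h)).trans (hu' w hw)⟩

lemma monLt_add_right (P : Cell →₀ ℕ) {M N : Cell →₀ ℕ} (h : monLt M N) :
    monLt (M + P) (N + P) := by
  obtain ⟨v, hv, hv'⟩ := h
  exact ⟨v, by simpa using hv, fun w hw => by simp [hv' w hw]⟩

lemma monLt_add_left (P : Cell →₀ ℕ) {M N : Cell →₀ ℕ} (h : monLt M N) :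
    monLt (P + M) (P + N) := by
  rw [add_comm P M, add_comm P N]
  exact monLt_add_right P h

lemma isInitMon_sum_monomial {ι : Type*} {s : Finset ι} {f : ι → Cell →₀ ℕ} {c : ι → ℤ}
    {i₀ : ι} (hi₀ : i₀ ∈ s) (hc : c i₀ ≠ 0) (hf : ∀ i ∈ s, i ≠ i₀ → monLt (f i₀) (f i)) :
    IsInitMon (∑ i ∈ s, monomial (f i) (c i)) (f i₀) := by
  classical
  have hcoeff : ∀ m, coeff m (∑ i ∈ s, monomial (f i) (c i)) =
      ∑ i ∈ s, if f i = m then c i else 0 := by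
    intro m
    simp only [coeff_sum, coeff_monomial]
  refine ⟨?_, fun m hm => ?_⟩
  · rw [mem_support_iff, hcoeff, Finset.sum_eq_single_of_mem i₀ hi₀, if_pos rfl]
    · exact hc
    · intro i hi hne
      rw [if_neg fun h => monLt_irrefl _ (h ▸ hf i hi hne)]
  · rw [mem_support_iff, hcoeff] at hm
    obtain ⟨i, hi, hne⟩ := Finset.exists_ne_zero_of_sum_ne_zero hm
    obtain rfl : f i = m := by
      by_contra h
      exact hne (if_neg h)
    by_cases h : i = i₀
    · exact Or.inl (h ▸ rfl)
    · exact Or.inr (hf i hi h)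

lemma mul_eq_sum_monomial (p q : MvPolynomial Cell ℤ) :
    p * q = ∑ x ∈ p.support ×ˢ q.support, monomial (x.1 + x.2) (coeff x.1 p * coeff x.2 q) := by
  conv_lhs => rw [p.as_sum, q.as_sum]
  simp only [Finset.sum_mul_sum, Finset.sum_product, monomial_mul]

lemma isInitMon_mul {p q : MvPolynomial Cell ℤ} {mp mq : Cell →₀ ℕ}
    (hp : IsInitMon p mp) (hq : IsInitMon q mq) : IsInitMon (p * q) (mp + mq) := by
  rw [mul_eq_sum_monomial]
  have hmem : (mp, mq) ∈ p.support ×ˢ q.support := Finset.mem_product.2 ⟨hp.1, hq.1⟩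
  have hc : coeff mp p * coeff mq q ≠ 0 :=
    mul_ne_zero (mem_support_iff.1 hp.1) (mem_support_iff.1 hq.1)
  refine isInitMon_sum_monomial (f := fun x : (Cell →₀ ℕ) × (Cell →₀ ℕ) => x.1 + x.2)
    (c := fun x => coeff x.1 p * coeff x.2 q) hmem hc ?_
  rintro ⟨m₁, m₂⟩ hm hne
  rw [Finset.mem_product] at hm
  rcases hp.2 m₁ hm.1 with rfl | h₁ <;> rcases hq.2 m₂ hm.2 with rfl | h₂
  · exact absurd rfl hne
  · exact monLt_add_left _ h₂
  · exact monLt_add_right _ h₁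
  · exact monLt_trans (monLt_add_right _ h₁) (monLt_add_left _ h₂)

lemma isInitMon_one : IsInitMon 1 0 := by
  refine ⟨by simp, fun m hm => Or.inl ?_⟩
  by_contra h
  rw [mem_support_iff, coeff_one, if_neg (Ne.symm h)] at hm
  exact hm rfl

lemma isInitMon_prod {ι : Type*} (s : Finset ι) (f : ι → MvPolynomial Cell ℤ)
    (m : ι → Cell →₀ ℕ) (h : ∀ i ∈ s, IsInitMon (f i) (m i)) :
    IsInitMon (∏ i ∈ s, f i) (∑ i ∈ s, m i) := by
  induction s using Finset.cons_induction with
  | empty => simpa using isInitMon_one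
  | cons a s ha ih =>
    rw [Finset.prod_cons, Finset.sum_cons]
    exact isInitMon_mul (h a (Finset.mem_cons_self a s))
      (ih fun i hi => h i (Finset.mem_cons_of_mem hi))

lemma Equiv.Perm.exists_lt_apply_of_ne_one {ι : Type*} [LinearOrder ι] [Fintype ι]
    {σ : Equiv.Perm ι} (hσ : σ ≠ 1) : ∃ t, t < σ t ∧ ∀ i < t, σ i = i := by
  classical
  have hne : σ.support.Nonempty :=
    Finset.nonempty_iff_ne_empty.2 (mt Equiv.Perm.support_eq_empty_iff.1 hσ)
  have ht := σ.support.min'_mem hne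
  refine ⟨σ.support.min' hne, lt_of_le_of_ne
    (σ.support.min'_le _ (Equiv.Perm.apply_mem_support.2 ht))
    (Equiv.Perm.mem_support.1 ht).symm, fun i hi => ?_⟩
  by_contra h
  exact (σ.support.min'_le i (Equiv.Perm.mem_support.2 h)).not_gt hi

section PermMonomial

variable {k : ℕ} {a b : Fin k → ℕ}

noncomputable def permMon (a b : Fin k → ℕ) (σ : Equiv.Perm (Fin k)) : Cell →₀ ℕ :=
  ∑ i, Finsupp.single (a (σ i), b i) 1

lemma permMon_apply (σ : Equiv.Perm (Fin k)) (w : Cell) :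
    permMon a b σ w = (Finset.univ.filter fun i => (a (σ i), b i) = w).card := by
  classical
  simp [permMon, Finsupp.finsetSum_apply, Finsupp.single_apply]

lemma det_X_eq_sum_monomial :
    (Matrix.of fun s t : Fin k => (X (a s, b t) : MvPolynomial Cell ℤ)).det =
      ∑ σ : Equiv.Perm (Fin k), monomial (permMon a b σ) (Equiv.Perm.sign σ : ℤ) := by
  rw [Matrix.det_apply']
  refine Finset.sum_congr rfl fun σ _ => ?_
  simp only [Matrix.of_apply, X, permMon, ← monomial_sum_one]
  rw [← eq_intCast (C (σ := Cell) (R := ℤ)), C_mul_monomial, mul_one]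

lemma permMon_one_lt (ha : StrictMono a) (hb : StrictMono b) {σ : Equiv.Perm (Fin k)}
    (hσ : σ ≠ 1) : monLt (permMon a b 1) (permMon a b σ) := by
  obtain ⟨t, ht, hfix⟩ := Equiv.Perm.exists_lt_apply_of_ne_one hσ
  have hat : a t < a (σ t) := ha ht
  refine ⟨(a (σ t), b t), ?_, fun w hw => ?_⟩
  · rw [permMon_apply, permMon_apply, Finset.card_eq_zero.2]
    · exact Finset.card_pos.2 ⟨t, by simp⟩
    · refine Finset.filter_eq_empty_iff.2 fun i _ h => ?_
      obtain rfl : i = t := hb.injective (congrArg Prod.snd h)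
      exact hat.ne (congrArg Prod.fst h)
  · rw [permMon_apply, permMon_apply]
    refine congrArg Finset.card (Finset.filter_congr fun i _ => ?_)
    rcases lt_or_ge i t with hi | hi
    · rw [hfix i hi, Equiv.Perm.one_apply]
    · have hbi : b t ≤ b i := hb.monotone hi
      have hcol : b i = b t → a i = a t ∧ a (σ i) = a (σ t) := fun h => by
        rw [hb.injective h]; exact ⟨rfl, rfl⟩
      rw [Equiv.Perm.one_apply, Prod.ext_iff, Prod.ext_iff]
      unfold varGt at hw
      dsimp only at hw ⊢
      omega

lemma isInitMon_det_X (ha : StrictMono a) (hb : StrictMono b) :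
    IsInitMon (Matrix.of fun s t : Fin k => (X (a s, b t) : MvPolynomial Cell ℤ)).det
      (permMon a b 1) := by
  rw [det_X_eq_sum_monomial]
  exact isInitMon_sum_monomial (Finset.mem_univ 1) (by simp)
    fun σ _ hσ => permMon_one_lt ha hb hσ

end PermMonomial

section Rows

variable (D : Finset Cell) (r : ℕ)

lemma mem_of_mem_rowColsList {c : ℕ} (h : c ∈ rowColsList D r) : (r, c) ∈ D := by
  obtain ⟨⟨r', c'⟩, hmem, rfl⟩ := Multiset.mem_map.1 ((Multiset.mem_sort _).1 h)
  obtain ⟨hD, rfl⟩ := Finset.mem_filter.1 hmem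
  exact hD

lemma pairwise_lt_rowColsList : (rowColsList D r).Pairwise (· < ·) := by
  have hnodup : (rowColsList D r).Nodup := by
    rw [rowColsList, ← Multiset.coe_nodup, Multiset.sort_eq]
    refine (D.filter fun c => c.1 = r).nodup.map_on fun x hx y hy hxy => ?_
    rw [Finset.mem_val, Finset.mem_filter] at hx hy
    exact Prod.ext (hx.2.trans hy.2.symm) hxy
  exact ((Multiset.pairwise_sort _ _).sortedLE.sortedLT_of_nodup hnodup).pairwise

lemma sum_get_rowColsList {M : Type*} [AddCommMonoid M] (f : ℕ → M) :
    ∑ s : Fin (rowColsList D r).length, f ((rowColsList D r).get s) =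
      ∑ c ∈ D.filter (·.1 = r), f c.2 := by
  simp only [List.get_eq_getElem, Fin.sum_univ_fun_getElem]
  rw [← Multiset.sum_coe, ← Multiset.map_coe, rowColsList, Multiset.sort_eq, Multiset.map_map]
  rfl

lemma isInitMon_rowBracket {T : Cell → ℕ} (hrow : RowStandard D T) :
    IsInitMon (rowBracket D T r) (∑ c ∈ D.filter (·.1 = r), Finsupp.single (T c, c.2) 1) := by
  have hb : StrictMono (rowColsList D r).get :=
    (pairwise_lt_rowColsList D r).sortedLT.strictMono_get
  have ha : StrictMono fun s => T (r, (rowColsList D r).get s) := fun s s' hss' =>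
    hrow r _ _ (mem_of_mem_rowColsList D r (List.get_mem _ _))
      (mem_of_mem_rowColsList D r (List.get_mem _ _)) (hb hss')
  have hdiag : permMon (fun s => T (r, (rowColsList D r).get s)) (rowColsList D r).get 1 =
      ∑ c ∈ D.filter (·.1 = r), Finsupp.single (T c, c.2) 1 := by
    simp only [permMon, Equiv.Perm.one_apply]
    rw [sum_get_rowColsList D r fun c => Finsupp.single (T (r, c), c) 1]
    refine Finset.sum_congr rfl fun c hc => ?_
    rw [← (Finset.mem_filter.1 hc).2]
  rw [← hdiag]
  exact isInitMon_det_X ha hb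

end Rows

theorem initial_monomial_is_diagonal_general
    (D : Finset Cell) (T : Cell → ℕ)
    (hrow : RowStandard D T) :
    IsInitMon (bracket D T) (diagMon D T) := by
  rw [bracket, diagMon, ← Finset.sum_fiberwise_of_maps_to (g := Prod.fst)
    (t := D.image Prod.fst) fun c hc => Finset.mem_image_of_mem _ hc]
  exact isInitMon_prod _ _ _ fun r _ => isInitMon_rowBracket D r hrow

/-- If `T` is a tableau of row-convex shape whose rows strictly increase and
whose columns contain no repeated letters, then the initial (lexicographically
smallest) monomial of `[T]` in the default diagonal term order is the diagonal
monomial `∏_{(i,c) ∈ D} x_{T(i,c), c}`. -/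
theorem initial_monomial_is_diagonal
    (D : Finset Cell) (hD : RowConvex D) (T : Cell → ℕ)
    (hrow : RowStandard D T)
    (hcol : ∀ i j k : ℕ, (i, k) ∈ D → (j, k) ∈ D → i ≠ j → T (i, k) ≠ T (j, k)) :
    IsInitMon (bracket D T) (diagMon D T) :=
  initial_monomial_is_diagonal_general D T hrow
end

section
/- Suppose p = Σ_i α_i [T_i] is a linear combination of brackets of row-standard tableaux of a common row-convex shape D, and p = Σ_j β_j [S_j] where the S_j are distinct straight tableaux of shape D (all β_j nonzero). Then the lexicographically smallest modified column word among the S_j is at least as large as the smallest modified column word among the T_i. -/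
open scoped BigOperators

/-!
Let `S j₀` have the smallest modified column word among the `Sⱼ`. Expanding the row minors,
every monomial of `[U]` is the diagonal monomial of a tableau obtained from `U` by permuting
entries within rows, and for row-standard `U` such a permutation strictly increases the
modified column word unless it is trivial. A diagonal monomial records the column contents,
which determine the modified column word and, for straight tableaux, the tableau itself.
Hence the diagonal monomial of `S j₀` has coefficient `1` in `[S j₀]` and `0` in every other
`[Sⱼ]`, so it occurs in some `[Tᵢ]`, which forces `modColWord Tᵢ ≤ modColWord S j₀`.
-/

open MvPolynomial

section Sorting

variable {ι α : Type*} [LinearOrder α]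

theorem Multiset.reverse_sort_le_eq_sort_ge (M : Multiset α) :
    (M.sort (· ≤ ·)).reverse = M.sort (· ≥ ·) := by
  refine List.Perm.eq_of_pairwise' (r := (· ≥ ·)) ?_ (Multiset.pairwise_sort _ _) ?_
  · exact List.pairwise_reverse.2 (Multiset.pairwise_sort M _)
  · rw [← Multiset.coe_eq_coe]
    simp

theorem Multiset.sort_ge_map_eq_cons [DecidableEq ι] {s : Multiset ι} {f : ι → α} {a : ι}
    (ha : a ∈ s) (hmax : ∀ i ∈ s, f i ≤ f a) :
    (s.map f).sort (· ≥ ·) = f a :: ((s.erase a).map f).sort (· ≥ ·) := by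
  conv_lhs => rw [← Multiset.cons_erase ha, Multiset.map_cons]
  refine Multiset.sort_cons _ _ _ fun b hb => ?_
  obtain ⟨i, hi, rfl⟩ := Multiset.mem_map.1 hb
  exact hmax i (Multiset.mem_of_mem_erase hi)

theorem Multiset.sort_ge_map_lt_of_le_of_lt (s : Multiset ι) {f g : ι → α}
    (hle : ∀ i ∈ s, f i ≤ g i) (hlt : ∃ i ∈ s, f i < g i) :
    (s.map f).sort (· ≥ ·) < (s.map g).sort (· ≥ ·) := by
  classical
  induction s using Multiset.strongInductionOn with
  | ih s ih =>
  obtain ⟨i₀, hi₀, hlt₀⟩ := hlt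
  have hne : s.toFinset.Nonempty := ⟨i₀, Multiset.mem_toFinset.2 hi₀⟩
  obtain ⟨a, ha, hfa⟩ := s.toFinset.exists_max_image f hne
  obtain ⟨b, hb, hgb⟩ := s.toFinset.exists_max_image g hne
  simp only [Multiset.mem_toFinset] at ha hb hfa hgb
  rcases ((hle a ha).trans (hgb a ha)).lt_or_eq with hab | hab
  · rw [sort_ge_map_eq_cons ha hfa, sort_ge_map_eq_cons hb hgb]
    exact List.Lex.rel hab
  · have hga : g a = f a := le_antisymm (hab ▸ hgb a ha) (hle a ha)
    rw [sort_ge_map_eq_cons ha hfa,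
      sort_ge_map_eq_cons ha (fun i hi => hga ▸ hab ▸ hgb i hi), hga]
    refine List.Lex.cons (ih _ (Multiset.erase_lt.2 ha)
      (fun i hi => hle i (Multiset.mem_of_mem_erase hi)) ⟨i₀, ?_, hlt₀⟩)
    refine (Multiset.mem_erase_of_ne ?_).2 hi₀
    rintro rfl
    exact hlt₀.ne hga.symm

end Sorting

theorem List.Lex.append_of_length_eq {α : Type*} {r : α → α → Prop} {u v : List α}
    (h : List.Lex r u v) (hl : u.length = v.length) (x y : List α) :
    List.Lex r (u ++ x) (v ++ y) := by
  induction h with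
  | nil => simp at hl
  | cons _ ih => exact .cons (ih (by simpa using hl))
  | rel h => exact .rel h

theorem List.flatMap_lt_flatMap {ι α : Type*} [LT α] {l₁ l₂ : List ι} {c : ι}
    {f g : ι → List α} (heq : ∀ k ∈ l₁, f k = g k) (hlen : (f c).length = (g c).length)
    (hlt : f c < g c) : (l₁ ++ c :: l₂).flatMap f < (l₁ ++ c :: l₂).flatMap g := by
  rw [List.flatMap_append, List.flatMap_append, List.flatMap_congr heq, List.flatMap_cons,
    List.flatMap_cons]
  exact List.append_left_lt (hlt.append_of_length_eq hlen _ _)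

theorem lexLe_iff_le {u v : List ℕ} : lexLe u v ↔ u ≤ v := by
  rw [lexLe, Std.le_iff_lt_or_eq, or_comm]
  exact Iff.rfl

section Tableaux

variable {D : Finset Cell}

theorem count_colEntries (V : Cell → ℕ) (a k : ℕ) :
    (colEntries D V k).count a = diagMon D V (a, k) := by
  classical
  simp only [colEntries, diagMon, Multiset.count_map, Finsupp.finsetSum_apply,
    Finsupp.single_apply, Prod.ext_iff, Finset.sum_boole]
  rw [← Finset.filter_val, Finset.filter_filter, ← Finset.card_def, Nat.cast_id]
  congr 1
  ext c
  simp [and_comm, eq_comm]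

theorem colEntries_eq_of_diagMon_eq {V W : Cell → ℕ} (h : diagMon D V = diagMon D W) (k : ℕ) :
    colEntries D V k = colEntries D W k :=
  Multiset.ext.2 fun a => by rw [count_colEntries, count_colEntries, h]

theorem modColWord_eq_of_diagMon_eq {V W : Cell → ℕ} (h : diagMon D V = diagMon D W) :
    modColWord D V = modColWord D W := by
  simp only [modColWord, colEntries_eq_of_diagMon_eq h]

theorem RowStandard.lt_of_le_of_ne {U : Cell → ℕ} (hU : RowStandard D U) {x y : Cell}
    (hx : x ∈ D) (hy : y ∈ D) (hrow : x.1 = y.1) (hcol : x.2 ≤ y.2) (hne : x ≠ y) :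
    U x < U y := by
  obtain ⟨r, i⟩ := x
  obtain ⟨r', j⟩ := y
  obtain rfl : r = r' := hrow
  exact hU r i j hx hy (hcol.lt_of_ne fun h => hne (Prod.ext rfl h))

variable (D) in
def permuteCells (U : Cell → ℕ) (σ : Equiv.Perm D) : Cell → ℕ :=
  fun c => if h : c ∈ D then U (σ ⟨c, h⟩) else U c

theorem permuteCells_apply (U : Cell → ℕ) (σ : Equiv.Perm D) (x : D) :
    permuteCells D U σ x = U (σ x) :=
  dif_pos x.2

@[simp]
theorem permuteCells_one (U : Cell → ℕ) : permuteCells D U 1 = U := by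
  funext c
  by_cases hc : c ∈ D <;> simp [permuteCells, hc]

/-- Let `k` be the first column containing a cell moved by `σ`. Cells left of column `k` are
fixed, so `σ` maps the cells of column `k` weakly to the right within their rows: column `k`
of the permuted tableau dominates that of `U` entrywise, strictly at a moved cell. -/
theorem modColWord_lt_permuteCells {U : Cell → ℕ} (hU : RowStandard D U) {σ : Equiv.Perm D}
    (hrow : ∀ x, (σ x).1.1 = x.1.1) (hσ : σ ≠ 1) :
    modColWord D U < modColWord D (permuteCells D U σ) := by
  classical
  obtain ⟨x₀, hx₀, hmin⟩ := (Finset.univ.filter fun x : D => σ x ≠ x).exists_min_image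
    (fun x => x.1.2) (by
      obtain ⟨x, hx⟩ := not_forall.1 (mt Equiv.ext hσ)
      exact ⟨x, by simpa using hx⟩)
  simp only [Finset.mem_filter, Finset.mem_univ, true_and] at hx₀ hmin
  set k := x₀.1.2
  have hfix : ∀ x : D, x.1.2 < k → σ x = x := fun x hx =>
    by_contra fun h => (hmin x h).not_gt hx
  have hright : ∀ x : D, k ≤ x.1.2 → k ≤ (σ x).1.2 := by
    intro x hx
    by_contra! h
    rw [σ.injective (hfix _ h)] at h
    omega
  have hdom : ∀ x : D, x.1.2 = k → σ x ≠ x → U x < U (σ x) := fun x hx hne =>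
    hU.lt_of_le_of_ne x.2 (σ x).2 (hrow x).symm (hx ▸ hright x hx.ge)
      fun h => hne (Subtype.ext h.symm)
  obtain ⟨l₁, l₂, hl⟩ := List.mem_iff_append.1
    (List.mem_range.2 (Nat.lt_succ_of_le (Finset.le_sup (f := Prod.snd) x₀.2)))
  have hbefore : ∀ k' ∈ l₁, k' < k := by
    have := hl ▸ List.pairwise_lt_range (n := D.sup Prod.snd + 1)
    exact fun k' hk' => List.pairwise_append.1 this |>.2.2 k' hk' k List.mem_cons_self
  rw [modColWord, modColWord, hl]
  refine List.flatMap_lt_flatMap (fun k' hk' => ?_) (by simp [colEntries]) ?_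
  · refine congrArg _ (congrArg _ (Multiset.map_congr rfl fun c hc => ?_))
    obtain ⟨hcD, rfl⟩ := Finset.mem_filter.1 hc
    rw [permuteCells_apply (x := ⟨c, hcD⟩), hfix ⟨c, hcD⟩ (hbefore _ hk')]
  · simp only [colEntries, Multiset.reverse_sort_le_eq_sort_ge]
    refine Multiset.sort_ge_map_lt_of_le_of_lt _ (fun c hc => ?_) ⟨x₀, ?_, ?_⟩
    · obtain ⟨hcD, hck⟩ := Finset.mem_filter.1 hc
      rw [permuteCells_apply (x := ⟨c, hcD⟩)]
      by_cases hσc : σ ⟨c, hcD⟩ = ⟨c, hcD⟩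
      · rw [hσc]
      · exact (hdom ⟨c, hcD⟩ hck hσc).le
    · exact Finset.mem_filter.2 ⟨x₀.2, rfl⟩
    · rw [permuteCells_apply]
      exact hdom x₀ rfl hx₀

theorem modColWord_le_permuteCells {U : Cell → ℕ} (hU : RowStandard D U) {σ : Equiv.Perm D}
    (hrow : ∀ x, (σ x).1.1 = x.1.1) :
    modColWord D U ≤ modColWord D (permuteCells D U σ) := by
  obtain rfl | hσ := eq_or_ne σ 1
  · rw [permuteCells_one]
  · exact (modColWord_lt_permuteCells hU hrow hσ).le

end Tableaux

section Bracket

variable (D : Finset Cell)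

theorem mem_rowColsList {r c : ℕ} : c ∈ rowColsList D r ↔ (r, c) ∈ D := by
  simp [rowColsList]

theorem nodup_rowColsList (r : ℕ) : (rowColsList D r).Nodup := by
  rw [rowColsList, ← Multiset.coe_nodup, Multiset.sort_eq]
  refine (Finset.nodup _).map_on fun x hx y hy hxy => Prod.ext ?_ hxy
  rw [(Finset.mem_filter.1 hx).2, (Finset.mem_filter.1 hy).2]

def rowCellsEquiv (r : ℕ) : Fin (rowColsList D r).length ≃ {x : D // x.1.1 = r} :=
  (List.Nodup.getEquiv _ (nodup_rowColsList D r)).trans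
    { toFun := fun c => ⟨⟨(r, c), (mem_rowColsList D).1 c.2⟩, rfl⟩
      invFun := fun x => ⟨x.1.1.2, (mem_rowColsList D).2 (by
        rw [show ((r, x.1.1.2) : Cell) = x.1.1 from Prod.ext x.2.symm rfl]
        exact x.1.2)⟩
      left_inv := fun _ => rfl
      right_inv := fun x => by
        obtain ⟨⟨⟨r', c⟩, hx⟩, rfl⟩ := x
        rfl }

theorem rowCellsEquiv_apply (r : ℕ) (t : Fin (rowColsList D r).length) :
    (rowCellsEquiv D r t).1.1 = (r, (rowColsList D r).get t) :=
  rfl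

noncomputable def bracketMatrix (U : Cell → ℕ) : Matrix D D (MvPolynomial Cell ℤ) :=
  Matrix.of fun a b => if a.1.1 = b.1.1 then X (U a, b.1.2) else 0

theorem bracket_eq_det (U : Cell → ℕ) : bracket D U = (bracketMatrix D U).det := by
  classical
  have hblock : (bracketMatrix D U).BlockTriangular fun x => x.1.1 := fun a b h => by
    simp [bracketMatrix, h.ne']
  have himage : Finset.univ.image (fun x : D => x.1.1) = D.image Prod.fst := by
    ext r
    simp
  rw [hblock.det, himage, bracket]
  refine Finset.prod_congr rfl fun r _ => ?_
  rw [rowBracket, ← Matrix.det_submatrix_equiv_self (rowCellsEquiv D r)]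
  congr 1
  refine Matrix.ext fun s t => ?_
  simp [bracketMatrix, Matrix.toSquareBlock, Matrix.toSquareBlockProp, rowCellsEquiv_apply]

end Bracket

section Expansion

variable {D : Finset Cell}

theorem prod_bracketMatrix (U : Cell → ℕ) (σ : Equiv.Perm D) :
    ∏ x, bracketMatrix D U (σ x) x =
      if ∀ x, (σ x).1.1 = x.1.1 then monomial (diagMon D (permuteCells D U σ)) 1 else 0 := by
  split_ifs with hrow
  · simp only [bracketMatrix, Matrix.of_apply, hrow, if_true]
    rw [diagMon, ← Finset.sum_coe_sort D, monomial_sum_one]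
    refine Finset.prod_congr rfl fun x _ => ?_
    rw [permuteCells_apply]
    rfl
  · obtain ⟨x, hx⟩ := not_forall.1 hrow
    exact Finset.prod_eq_zero (Finset.mem_univ x) (by simp [bracketMatrix, hx])

theorem exists_permuteCells_of_mem_support_bracket {U : Cell → ℕ} {m : Cell →₀ ℕ}
    (hm : m ∈ (bracket D U).support) :
    ∃ σ : Equiv.Perm D, (∀ x, (σ x).1.1 = x.1.1) ∧ m = diagMon D (permuteCells D U σ) := by
  classical
  rw [bracket_eq_det, Matrix.det_apply] at hm
  obtain ⟨σ, -, hσ⟩ := Finset.mem_biUnion.1 (support_sum hm)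
  have hσ' := support_smul hσ
  rw [prod_bracketMatrix] at hσ'
  split_ifs at hσ' with hrow
  · exact ⟨σ, hrow, Finset.mem_singleton.1 (support_monomial_subset hσ')⟩
  · simp at hσ'

theorem coeff_diagMon_bracket {U : Cell → ℕ} (hU : RowStandard D U) :
    coeff (diagMon D U) (bracket D U) = 1 := by
  classical
  rw [bracket_eq_det, Matrix.det_apply, coeff_sum, Finset.sum_eq_single 1]
  · rw [coeff_smul, prod_bracketMatrix]
    simp
  · intro σ _ hσ
    rw [coeff_smul, prod_bracketMatrix]
    split_ifs with hrow
    · rw [coeff_monomial, if_neg, smul_zero]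
      exact fun h =>
        (modColWord_lt_permuteCells hU hrow hσ).ne (modColWord_eq_of_diagMon_eq h.symm)
    · simp
  · simp

end Expansion

section ColumnAssignment

variable {ι κ β : Type*} [LinearOrder κ] [LinearOrder β] {key : ι → κ} {B : ι → β → Prop}
  {s : Finset ι} {f g : ι → β}

/-- If `f a < g a`, the value `f a` sits under `g` at a later position `j`, forcing
`g a ≤ g j = f a`. -/
theorem not_lt_of_map_eq_of_forall_le (hinj : Set.InjOn key s)
    (hmap : s.val.map f = s.val.map g) {a : ι} (ha : a ∈ s) (hmin : ∀ x ∈ s, key a ≤ key x)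
    (hBf : B a (f a)) (hg : ∀ j ∈ s, key a < key j → B a (g j) → g a ≤ g j) :
    ¬ f a < g a := by
  intro hlt
  obtain ⟨j, hj, hgj⟩ := Multiset.mem_map.1 (hmap ▸ Multiset.mem_map_of_mem f ha)
  have hja : j ≠ a := by
    rintro rfl
    exact hlt.ne hgj.symm
  have hkey : key a < key j := (hmin j hj).lt_of_ne fun h => hja (hinj hj ha h.symm)
  exact (hg j hj hkey (hgj ▸ hBf) |>.trans_eq hgj).not_gt hlt

theorem eqOn_of_map_eq_of_ordered (hinj : Set.InjOn key s)
    (hBf : ∀ i ∈ s, B i (f i)) (hBg : ∀ i ∈ s, B i (g i))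
    (hf : ∀ i ∈ s, ∀ j ∈ s, key i < key j → B i (f j) → f i ≤ f j)
    (hg : ∀ i ∈ s, ∀ j ∈ s, key i < key j → B i (g j) → g i ≤ g j)
    (hmap : s.val.map f = s.val.map g) : ∀ i ∈ s, f i = g i := by
  classical
  induction s using Finset.induction_on_min_value key with
  | empty => simp
  | insert a s ha hmin ih =>
    have ha' : a ∈ insert a s := Finset.mem_insert_self a s
    have hmin' : ∀ x ∈ insert a s, key a ≤ key x := fun x hx =>
      (Finset.mem_insert.1 hx).elim (fun h => h ▸ le_rfl) (hmin x)
    have hfa : f a = g a := le_antisymm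
      (not_lt.1 (not_lt_of_map_eq_of_forall_le hinj hmap.symm ha' hmin' (hBg a ha') (hf a ha')))
      (not_lt.1 (not_lt_of_map_eq_of_forall_le hinj hmap ha' hmin' (hBf a ha') (hg a ha')))
    have hsub : s ⊆ insert a s := Finset.subset_insert a s
    rw [Finset.insert_val_of_notMem ha, Multiset.map_cons, Multiset.map_cons, hfa,
      Multiset.cons_inj_right] at hmap
    intro i hi
    obtain rfl | hi := Finset.mem_insert.1 hi
    · exact hfa
    · exact ih (hinj.mono (Finset.coe_subset.2 hsub)) (fun i hi => hBf i (hsub hi))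
        (fun i hi => hBg i (hsub hi)) (fun i hi j hj => hf i (hsub hi) j (hsub hj))
        (fun i hi j hj => hg i (hsub hi) j (hsub hj)) hmap i hi

end ColumnAssignment

section Straight

variable {D : Finset Cell}

theorem Straight.le_of_left_lt {S : Cell → ℕ} (hS : Straight D S) {i j k : ℕ}
    (hi : (i, k) ∈ D) (hj : (j, k) ∈ D) (hij : i < j)
    (hleft : 1 ≤ k → (i, k - 1) ∈ D → S (i, k - 1) < S (j, k)) :
    S (i, k) ≤ S (j, k) := by
  by_contra! h
  obtain ⟨hk, hmem, hlt⟩ := hS.2 i j k hi hj hij h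
  exact (hleft hk hmem).not_gt hlt

theorem Straight.eqOn_of_colEntries_eq {S S' : Cell → ℕ} (hS : Straight D S)
    (hS' : Straight D S') (h : ∀ k, colEntries D S k = colEntries D S' k) :
    ∀ c ∈ D, S c = S' c := by
  classical
  suffices ∀ k, ∀ c ∈ D.filter (·.2 = k), S c = S' c from
    fun c hc => this c.2 c (Finset.mem_filter.2 ⟨hc, rfl⟩)
  intro k
  induction k using Nat.strong_induction_on with
  | _ k ih =>
  have hleft : ∀ i, 1 ≤ k → (i, k - 1) ∈ D → S (i, k - 1) = S' (i, k - 1) := fun i hk hi =>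
    ih (k - 1) (by omega) _ (Finset.mem_filter.2 ⟨hi, rfl⟩)
  -- `B c v`: `v` exceeds the entry left of `c`, which `S` and `S'` share by induction.
  -- Straightness orders such values down column `k`, which pins the column down.
  refine eqOn_of_map_eq_of_ordered (key := Prod.fst)
    (B := fun c v => 1 ≤ c.2 → (c.1, c.2 - 1) ∈ D → S (c.1, c.2 - 1) < v)
    ?_ ?_ ?_ ?_ ?_ (h k)
  · rintro ⟨i, k₁⟩ hi ⟨j, k₂⟩ hj (rfl : i = j)
    exact Prod.ext rfl ((Finset.mem_filter.1 hi).2.trans (Finset.mem_filter.1 hj).2.symm)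
  · rintro ⟨i, k₁⟩ hi hk hmem
    obtain ⟨hiD, rfl⟩ := Finset.mem_filter.1 hi
    exact hS.1 i (k₁ - 1) k₁ hmem hiD (by dsimp only at hk; omega)
  · rintro ⟨i, k₁⟩ hi hk hmem
    obtain ⟨hiD, rfl⟩ := Finset.mem_filter.1 hi
    exact (hleft i hk hmem).trans_lt (hS'.1 i (k₁ - 1) k₁ hmem hiD (by dsimp only at hk; omega))
  · rintro ⟨i, k₁⟩ hi ⟨j, k₂⟩ hj (hij : i < j) hB
    obtain ⟨hiD, rfl⟩ := Finset.mem_filter.1 hi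
    obtain ⟨hjD, rfl⟩ := Finset.mem_filter.1 hj
    exact hS.le_of_left_lt hiD hjD hij hB
  · rintro ⟨i, k₁⟩ hi ⟨j, k₂⟩ hj (hij : i < j) hB
    obtain ⟨hiD, rfl⟩ := Finset.mem_filter.1 hi
    obtain ⟨hjD, rfl⟩ := Finset.mem_filter.1 hj
    exact hS'.le_of_left_lt hiD hjD hij fun hk hmem => hleft i hk hmem ▸ hB hk hmem

end Straight

theorem coeff_diagMon_bracket_eq_zero {D : Finset Cell} {S S' : Cell → ℕ} (hS : Straight D S)
    (hS' : Straight D S') (hne : ∃ c ∈ D, S' c ≠ S c)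
    (hle : modColWord D S ≤ modColWord D S') : coeff (diagMon D S) (bracket D S') = 0 := by
  by_contra h
  obtain ⟨σ, hrow, hσ⟩ := exists_permuteCells_of_mem_support_bracket (mem_support_iff.2 h)
  obtain rfl | hσ1 := eq_or_ne σ 1
  · rw [permuteCells_one] at hσ
    obtain ⟨c, hc, hne⟩ := hne
    exact hne (hS'.eqOn_of_colEntries_eq hS (colEntries_eq_of_diagMon_eq hσ.symm) c hc)
  · have hlt := modColWord_lt_permuteCells hS'.1 hrow hσ1
    rw [← modColWord_eq_of_diagMon_eq hσ] at hlt
    exact hlt.not_ge hle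

theorem min_modColWord_of_straight_expansion_general
    (D : Finset Cell)
    (m n : ℕ) (hn : 0 < n)
    (α : Fin m → ℤ) (T : Fin m → Cell → ℕ)
    (β : Fin n → ℤ) (S : Fin n → Cell → ℕ)
    (hT : ∀ i, RowStandard D (T i))
    (hS : ∀ j, Straight D (S j))
    (hβ : ∀ j, β j ≠ 0)
    (hdist : ∀ j j' : Fin n, j ≠ j' → ∃ c ∈ D, S j c ≠ S j' c)
    (heq : ∑ i, α i • bracket D (T i) = ∑ j, β j • bracket D (S j)) :
    ∃ i : Fin m, ∀ j : Fin n,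
      lexLe (modColWord D (T i)) (modColWord D (S j)) := by
  obtain ⟨j₀, -, hj₀⟩ := Finset.univ.exists_min_image (fun j => modColWord D (S j))
    ⟨⟨0, hn⟩, Finset.mem_univ _⟩
  have hcoeff : coeff (diagMon D (S j₀)) (∑ j, β j • bracket D (S j)) = β j₀ := by
    rw [coeff_sum, Finset.sum_eq_single j₀ (fun j _ hj => ?_) (by simp), coeff_smul,
      coeff_diagMon_bracket (hS j₀).1, smul_eq_mul, mul_one]
    rw [coeff_smul, coeff_diagMon_bracket_eq_zero (hS j₀) (hS j) (hdist j j₀ hj)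
      (hj₀ j (Finset.mem_univ j)), smul_zero]
  obtain ⟨i, hi⟩ : ∃ i, coeff (diagMon D (S j₀)) (bracket D (T i)) ≠ 0 := by
    by_contra! h
    apply hβ j₀
    rw [← hcoeff, ← heq, coeff_sum]
    simp only [coeff_smul, h, smul_zero, Finset.sum_const_zero]
  obtain ⟨σ, hrow, hσ⟩ := exists_permuteCells_of_mem_support_bracket (mem_support_iff.2 hi)
  refine ⟨i, fun j => lexLe_iff_le.2 ?_⟩
  calc modColWord D (T i) ≤ modColWord D (permuteCells D (T i) σ) :=
        modColWord_le_permuteCells (hT i) hrow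
    _ = modColWord D (S j₀) := modColWord_eq_of_diagMon_eq hσ.symm
    _ ≤ modColWord D (S j) := hj₀ j (Finset.mem_univ j)

/-- If `p = Σ αᵢ [Tᵢ]` with the `Tᵢ` row-standard of row-convex shape `D`, and
also `p = Σ βⱼ [Sⱼ]` with the `Sⱼ` distinct straight tableaux of shape `D` and
all `βⱼ ≠ 0`, then the lexicographically smallest modified column word among
the `Sⱼ` is at least as large as the smallest modified column word among the
`Tᵢ`: some `Tᵢ` has modified column word lexicographically ≤ all of them. -/
theorem min_modColWord_of_straight_expansion
    (D : Finset Cell) (hD : RowConvex D)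
    (m n : ℕ) (hm : 0 < m) (hn : 0 < n)
    (α : Fin m → ℤ) (T : Fin m → Cell → ℕ)
    (β : Fin n → ℤ) (S : Fin n → Cell → ℕ)
    (hT : ∀ i, RowStandard D (T i))
    (hS : ∀ j, Straight D (S j))
    (hβ : ∀ j, β j ≠ 0)
    (hdist : ∀ j j' : Fin n, j ≠ j' → ∃ c ∈ D, S j c ≠ S j' c)
    (heq : ∑ i, α i • bracket D (T i) = ∑ j, β j • bracket D (S j)) :
    ∃ i : Fin m, ∀ j : Fin n,
      lexLe (modColWord D (T i)) (modColWord D (S j)) :=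
  min_modColWord_of_straight_expansion_general D m n hn α T β S hT hS hβ hdist heq
end

section
/- Let E and E' be two vertical strips (or two horizontal strips) in a row-convex shape D. If the multisets of column indices of the cells of E and of E' coincide, then E = E'. -/
open scoped BigOperators

/-- Rows weakly increase (positive letters). -/
def RowWeak (D : Finset Cell) (T : Cell → ℕ) : Prop :=
  ∀ r i j : ℕ, (r, i) ∈ D → (r, j) ∈ D → i < j → T (r, i) ≤ T (r, j)

/-- Straight tableau, positive-letter case. -/
def StraightPos (D : Finset Cell) (T : Cell → ℕ) : Prop :=
  RowWeak D T ∧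
    ∀ i j k : ℕ, (i, k) ∈ D → (j, k) ∈ D → i < j → T (j, k) ≤ T (i, k) →
      1 ≤ k ∧ (i, k - 1) ∈ D ∧ T (j, k) < T (i, k - 1)

/-- A vertical strip in `D`: the set of cells carrying the smallest letter `a`
(negatively signed) in some straight tableau of shape `D`. -/
def VStrip (D E : Finset Cell) : Prop :=
  ∃ (T : Cell → ℕ) (a : ℕ), Straight D T ∧ (∀ c ∈ D, a ≤ T c) ∧
    E = D.filter fun c => T c = a

/-- A horizontal strip in `D`: the set of cells carrying the smallest letter
`a` (positively signed) in some positive-letter straight tableau of shape `D`. -/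
def HStrip (D E : Finset Cell) : Prop :=
  ∃ (T : Cell → ℕ) (a : ℕ), StraightPos D T ∧ (∀ c ∈ D, a ≤ T c) ∧
    E = D.filter fun c => T c = a

/-- The multiset of column indices of the cells of a strip. -/
def colIdx (E : Finset Cell) : Multiset ℕ := E.val.map Prod.snd

/- ### Auxiliary lemmas -/

lemma colIdx_count (F : Finset Cell) (k : ℕ) :
    (F.filter fun c => c.2 = k).card = Multiset.count k (colIdx F) := by
  rw [colIdx, Multiset.count_map, Finset.card_def, Finset.filter_val]
  congr 1
  apply Multiset.filter_congr
  intro c _; simp [eq_comm]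

lemma colIdx_mem (F : Finset Cell) (k : ℕ) :
    k ∈ colIdx F ↔ ∃ r, (r, k) ∈ F := by
  constructor
  · intro h
    obtain ⟨c, hc, h2⟩ := Multiset.mem_map.mp h
    exact ⟨c.1, by simpa [← h2] using hc⟩
  · rintro ⟨r, hr⟩
    exact Multiset.mem_map.mpr ⟨(r, k), hr, rfl⟩

lemma rows_mem (F : Finset Cell) (k r : ℕ) :
    r ∈ (F.filter fun c => c.2 = k).image Prod.fst ↔ (r, k) ∈ F := by
  simp only [Finset.mem_image, Finset.mem_filter]
  constructor
  · rintro ⟨⟨a, b⟩, ⟨hm, hb⟩, rfl⟩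
    simp only at hb
    rwa [hb] at hm
  · intro h; exact ⟨(r, k), ⟨h, rfl⟩, rfl⟩

lemma rows_card (F : Finset Cell) (k : ℕ) :
    ((F.filter fun c => c.2 = k).image Prod.fst).card
      = (F.filter fun c => c.2 = k).card := by
  apply Finset.card_image_of_injOn
  intro c hc d hd h
  simp only [Finset.coe_filter, Set.mem_setOf_eq] at hc hd
  exact Prod.ext h (hc.2.trans hd.2.symm)

/-- Two down-closed subsets of `S` with the same cardinality coincide. -/
lemma downclosed_eq (S A B : Finset ℕ)
    (hA : A ⊆ S) (hB : B ⊆ S)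
    (hAd : ∀ a ∈ A, ∀ s ∈ S, s ≤ a → s ∈ A)
    (hBd : ∀ b ∈ B, ∀ s ∈ S, s ≤ b → s ∈ B)
    (hcard : A.card = B.card) : A = B := by
  by_cases hAB : A ⊆ B
  · exact Finset.eq_of_subset_of_card_le hAB hcard.ge
  · obtain ⟨a, ha, haB⟩ := Finset.not_subset.mp hAB
    have hBA : B ⊆ A := by
      intro b hb
      rcases le_or_gt a b with h | h
      · exact absurd (hBd b hb a (hA ha) h) haB
      · exact hAd a ha b (hB hb) h.le
    exact (Finset.eq_of_subset_of_card_le hBA hcard.le).symm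

/-- Abstract uniqueness for vertical strips. -/
lemma vstrip_eq (D E E' : Finset Cell)
    (hED : E ⊆ D) (hE'D : E' ⊆ D)
    (h2 : ∀ r k, (r, k) ∈ E → 1 ≤ k → (r, k - 1) ∉ D)
    (h2' : ∀ r k, (r, k) ∈ E' → 1 ≤ k → (r, k - 1) ∉ D)
    (h3 : ∀ i j k, (j, k) ∈ E → i < j → (i, k) ∈ D →
      (k = 0 ∨ (i, k - 1) ∉ D) → (i, k) ∈ E)
    (h3' : ∀ i j k, (j, k) ∈ E' → i < j → (i, k) ∈ D →
      (k = 0 ∨ (i, k - 1) ∉ D) → (i, k) ∈ E')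
    (hcol : colIdx E = colIdx E') : E = E' := by
  have key : ∀ k, (E.filter fun c => c.2 = k).image Prod.fst
      = (E'.filter fun c => c.2 = k).image Prod.fst := by
    intro k
    set S : Finset ℕ :=
      (D.image Prod.fst).filter fun r => (r, k) ∈ D ∧ (k = 0 ∨ (r, k - 1) ∉ D)
        with hS
    have hSmem : ∀ r, r ∈ S ↔ (r, k) ∈ D ∧ (k = 0 ∨ (r, k - 1) ∉ D) := by
      intro r
      rw [hS, Finset.mem_filter]
      constructor
      · exact fun h => h.2
      · intro h
        exact ⟨Finset.mem_image.mpr ⟨(r, k), h.1, rfl⟩, h⟩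
    have sub : ∀ (F : Finset Cell), F ⊆ D →
        (∀ r k, (r, k) ∈ F → 1 ≤ k → (r, k - 1) ∉ D) →
        (F.filter fun c => c.2 = k).image Prod.fst ⊆ S := by
      intro F hFD hF2 r hr
      rw [rows_mem] at hr
      rw [hSmem]
      refine ⟨hFD hr, ?_⟩
      rcases Nat.eq_zero_or_pos k with h0 | h0
      · exact Or.inl h0
      · exact Or.inr (hF2 r k hr h0)
    have down : ∀ (F : Finset Cell), F ⊆ D →
        (∀ i j k, (j, k) ∈ F → i < j → (i, k) ∈ D →
          (k = 0 ∨ (i, k - 1) ∉ D) → (i, k) ∈ F) →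
        ∀ a ∈ (F.filter fun c => c.2 = k).image Prod.fst, ∀ s ∈ S, s ≤ a →
          s ∈ (F.filter fun c => c.2 = k).image Prod.fst := by
      intro F hFD hF3 a ha s hs hsa
      rw [rows_mem] at ha ⊢
      rw [hSmem] at hs
      rcases eq_or_lt_of_le hsa with rfl | hlt
      · exact ha
      · exact hF3 s a k ha hlt hs.1 hs.2
    apply downclosed_eq S
    · exact sub E hED h2
    · exact sub E' hE'D h2'
    · exact down E hED h3
    · exact down E' hE'D h3'
    · rw [rows_card, rows_card, colIdx_count, colIdx_count, hcol]
  ext ⟨r, k⟩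
  rw [← rows_mem E k r, ← rows_mem E' k r, key k]

/-- Abstract uniqueness for horizontal strips. -/
lemma hstrip_eq (D E E' : Finset Cell)
    (hED : E ⊆ D) (hE'D : E' ⊆ D)
    (h2 : ∀ r k k', (r, k) ∈ E → (r, k') ∈ D → k' ≤ k → (r, k') ∈ E)
    (h2' : ∀ r k k', (r, k) ∈ E' → (r, k') ∈ D → k' ≤ k → (r, k') ∈ E')
    (h3 : ∀ i r k, (r, k) ∈ E → i < r → (i, k) ∈ D →
      1 ≤ k ∧ (i, k - 1) ∈ D ∧ (i, k - 1) ∉ E)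
    (h3' : ∀ i r k, (r, k) ∈ E' → i < r → (i, k) ∈ D →
      1 ≤ k ∧ (i, k - 1) ∈ D ∧ (i, k - 1) ∉ E')
    (hcol : colIdx E = colIdx E') : E = E' := by
  have key : ∀ k, ∀ p q, (p, k) ∈ E → (q, k) ∈ E' → p = q := by
    intro k
    induction k using Nat.strong_induction_on with
    | _ k ih =>
    intro p q hp hq
    by_contra hne
    rcases lt_trichotomy p q with h | h | h
    · obtain ⟨hk1, hDm, hnE'⟩ := h3' p q k hq h (hED hp)
      have hpE : (p, k - 1) ∈ E := h2 p k (k - 1) hp hDm (Nat.sub_le k 1)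
      have hmem : (k - 1) ∈ colIdx E' := by
        rw [← hcol, colIdx_mem]; exact ⟨p, hpE⟩
      obtain ⟨q', hq'⟩ := (colIdx_mem E' (k - 1)).mp hmem
      have := ih (k - 1) (by omega) p q' hpE hq'
      exact hnE' (this ▸ hq')
    · exact hne h
    · obtain ⟨hk1, hDm, hnE⟩ := h3 q p k hp h (hE'D hq)
      have hqE' : (q, k - 1) ∈ E' := h2' q k (k - 1) hq hDm (Nat.sub_le k 1)
      have hmem : (k - 1) ∈ colIdx E := by
        rw [hcol, colIdx_mem]; exact ⟨q, hqE'⟩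
      obtain ⟨p', hp'⟩ := (colIdx_mem E (k - 1)).mp hmem
      have := ih (k - 1) (by omega) p' q hp' hqE'
      exact hnE (this ▸ hp')
  ext ⟨r, k⟩
  constructor
  · intro hr
    have : k ∈ colIdx E' := by rw [← hcol, colIdx_mem]; exact ⟨r, hr⟩
    obtain ⟨q, hq⟩ := (colIdx_mem E' k).mp this
    rwa [key k r q hr hq]
  · intro hr
    have : k ∈ colIdx E := by rw [hcol, colIdx_mem]; exact ⟨r, hr⟩
    obtain ⟨p, hp⟩ := (colIdx_mem E k).mp this
    rwa [← key k p r hp hr]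

/-- A vertical (respectively horizontal) strip in a row-convex shape `D` is
determined by the multiset of column indices of its cells. -/
theorem strip_determined_by_column_indices
    (D : Finset Cell) (hD : RowConvex D) :
    (∀ E E' : Finset Cell, VStrip D E → VStrip D E' →
      colIdx E = colIdx E' → E = E') ∧
    (∀ E E' : Finset Cell, HStrip D E → HStrip D E' →
      colIdx E = colIdx E' → E = E') := by
  constructor
  · -- vertical strips
    have main : ∀ E : Finset Cell, VStrip D E →
        E ⊆ D ∧
        (∀ r k, (r, k) ∈ E → 1 ≤ k → (r, k - 1) ∉ D) ∧
        (∀ i j k, (j, k) ∈ E → i < j → (i, k) ∈ D →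
          (k = 0 ∨ (i, k - 1) ∉ D) → (i, k) ∈ E) := by
      rintro E ⟨T, a, ⟨hrow, hstr⟩, hmin, rfl⟩
      refine ⟨Finset.filter_subset _ _, ?_, ?_⟩
      · intro r k hr hk hmem
        rw [Finset.mem_filter] at hr
        have h1 : T (r, k - 1) < T (r, k) := hrow r (k - 1) k hmem hr.1 (by omega)
        have h2 : a ≤ T (r, k - 1) := hmin _ hmem
        omega
      · intro i j k hj hij hi hside
        rw [Finset.mem_filter] at hj ⊢
        refine ⟨hi, ?_⟩
        by_contra hne
        have hgt : T (j, k) < T (i, k) := by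
          have := hmin _ hi
          omega
        obtain ⟨hk1, hm, _⟩ := hstr i j k hi hj.1 hij hgt
        rcases hside with h0 | h0
        · omega
        · exact h0 hm
    intro E E' hE hE' hcol
    obtain ⟨s1, s2, s3⟩ := main E hE
    obtain ⟨t1, t2, t3⟩ := main E' hE'
    exact vstrip_eq D E E' s1 t1 s2 t2 s3 t3 hcol
  · -- horizontal strips
    have main : ∀ E : Finset Cell, HStrip D E →
        E ⊆ D ∧
        (∀ r k k', (r, k) ∈ E → (r, k') ∈ D → k' ≤ k → (r, k') ∈ E) ∧
        (∀ i r k, (r, k) ∈ E → i < r → (i, k) ∈ D →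
          1 ≤ k ∧ (i, k - 1) ∈ D ∧ (i, k - 1) ∉ E) := by
      rintro E ⟨T, a, ⟨hrow, hstr⟩, hmin, rfl⟩
      refine ⟨Finset.filter_subset _ _, ?_, ?_⟩
      · intro r k k' hr hm hle
        rw [Finset.mem_filter] at hr ⊢
        refine ⟨hm, ?_⟩
        rcases eq_or_lt_of_le hle with rfl | hlt
        · exact hr.2
        · have h1 : T (r, k') ≤ T (r, k) := hrow r k' k hm hr.1 hlt
          have h2 : a ≤ T (r, k') := hmin _ hm
          omega
      · intro i r k hr hir hi
        rw [Finset.mem_filter] at hr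
        have hle : T (r, k) ≤ T (i, k) := by
          have := hmin _ hi
          omega
        obtain ⟨hk1, hm, hlt⟩ := hstr i r k hi hr.1 hir hle
        refine ⟨hk1, hm, ?_⟩
        intro hmem
        rw [Finset.mem_filter] at hmem
        omega
    intro E E' hE hE' hcol
    obtain ⟨s1, s2, s3⟩ := main E hE
    obtain ⟨t1, t2, t3⟩ := main E' hE'
    exact hstrip_eq D E E' s1 t1 s2 t2 s3 t3 hcol
end
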